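/- For every natural number n ≥ 1, every natural number k ≥ 0, and every nonzero complex number z: 2(n+1) z^{2n−1} P_{n+k}(J(z)) = A_k^{(n)}(z) G_n(z) + B_k^{(n)}(z) F_n(z). -/

import Mathlib

open Polynomial Finset

/-- The degree-`n` Legendre polynomial (over `ℂ`), defined by the Rodrigues formula
`P_n(x) = (1/(2^n n!)) dⁿ/dxⁿ (x²−1)ⁿ`. -/
noncomputable def legendre (n : ℕ) : Polynomial ℂ :=
  Polynomial.C (1 / (2 ^ n * n.factorial : ℂ)) *
    Polynomial.derivative^[n] ((Polynomial.X ^ 2 - 1) ^ n)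

/-- `P_n(z)`, the value of the degree-`n` Legendre polynomial at `z ∈ ℂ`. -/
noncomputable def P (n : ℕ) (z : ℂ) : ℂ := (legendre n).eval z

/-- `P_n'(z)`, the value of the derivative of the degree-`n` Legendre polynomial at `z ∈ ℂ`. -/
noncomputable def P' (n : ℕ) (z : ℂ) : ℂ := (Polynomial.derivative (legendre n)).eval z

/-- The Joukowski map `J(z) = (z + 1/z)/2`. -/
noncomputable def J (z : ℂ) : ℂ := (z + 1 / z) / 2

/-- `F_n(z) = (n+1) zⁿ P_n(J(z)) + (z^{n−1}(z²−1)/2) P_n'(J(z))`. -/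
noncomputable def F (n : ℕ) (z : ℂ) : ℂ :=
  (n + 1) * z ^ (n : ℤ) * P n (J z) + z ^ ((n : ℤ) - 1) * (z ^ 2 - 1) / 2 * P' n (J z)

/-- `G_n(z) = z^{2n} F_n(1/z)`. -/
noncomputable def G (n : ℕ) (z : ℂ) : ℂ := z ^ (2 * n) * F n (1 / z)

/-- The Laurent polynomials `A_k^{(n)}`: `A_0 = z^{n−1}`, `A_1 = z^{n−2}`, and for `k ≥ 1`,
`(n+k+1) A_{k+1} = (2(n+k)+1) J(z) A_k − (n+k) A_{k−1}`. -/
noncomputable def A (n : ℕ) : ℕ → ℂ → ℂ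
  | 0 => fun z => z ^ ((n : ℤ) - 1)
  | 1 => fun z => z ^ ((n : ℤ) - 2)
  | (k + 2) => fun z =>
      ((2 * ((n : ℂ) + (k + 1)) + 1) * J z * A n (k + 1) z - ((n : ℂ) + (k + 1)) * A n k z) /
        ((n : ℂ) + (k + 1) + 1)

/-- The Laurent polynomials `B_k^{(n)}`: `B_0 = z^{n−1}`, `B_1 = zⁿ`, and for `k ≥ 1`,
`(n+k+1) B_{k+1} = (2(n+k)+1) J(z) B_k − (n+k) B_{k−1}`. -/
noncomputable def B (n : ℕ) : ℕ → ℂ → ℂ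
  | 0 => fun z => z ^ ((n : ℤ) - 1)
  | 1 => fun z => z ^ (n : ℤ)
  | (k + 2) => fun z =>
      ((2 * ((n : ℂ) + (k + 1)) + 1) * J z * B n (k + 1) z - ((n : ℂ) + (k + 1)) * B n k z) /
        ((n : ℂ) + (k + 1) + 1)

/-! Rodrigues' formula gives, for every `n ≥ 0`, the identities `P'ₙ₊₁ = X P'ₙ + (n + 1) Pₙ`
and `(X² - 1) P'ₙ = (n + 1)(Pₙ₊₁ - X Pₙ)`, hence Bonnet's recurrence
`(m + 2) Pₘ₊₂ = (2m + 3) X Pₘ₊₁ - (m + 1) Pₘ`. With `w = J z` and `s = (z - 1/z)/2` one has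
`s² = w² - 1`, `F_n(z) = zⁿ((n + 1) Pₙ(w) + s P'ₙ(w))` and, since `J (1/z) = J z`,
`G_n(z) = zⁿ((n + 1) Pₙ(w) - s P'ₙ(w))`. The cases `k = 0, 1` are then direct computations, the
second one being the identity for `(X² - 1) P'ₙ`. For `k ≥ 2` both sides satisfy in `k` the
three-term recurrence that defines `A` and `B`, which for the left-hand side is Bonnet's
recurrence at `m = n + k`. -/

namespace Polynomial

variable {R : Type*} [CommRing R]

noncomputable def rodrigues (n : ℕ) : R[X] := derivative^[n] ((X ^ 2 - 1) ^ n)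

lemma derivative_X_sq_sub_one_pow_succ (n : ℕ) :
    derivative ((X ^ 2 - 1 : R[X]) ^ (n + 1)) = 2 * (n + 1 : R[X]) * (X * (X ^ 2 - 1) ^ n) := by
  rw [derivative_pow]
  simp only [derivative_sub, derivative_X_pow, derivative_one, C_eq_natCast]
  push_cast
  ring

lemma iterate_derivative_X_mul (m : ℕ) (p : R[X]) :
    derivative^[m] (X * p) = X * derivative^[m] p + m • derivative^[m - 1] p := by
  rw [mul_comm, iterate_derivative_mul_X, mul_comm]

lemma iterate_derivative_X_sq_sub_one_pow_succ (m n : ℕ) :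
    derivative^[m + 1] ((X ^ 2 - 1 : R[X]) ^ (n + 1)) =
      2 * (n + 1 : R[X]) * derivative^[m] (X * (X ^ 2 - 1) ^ n) := by
  rw [Function.iterate_succ_apply, derivative_X_sq_sub_one_pow_succ]
  exact_mod_cast iterate_derivative_natCast_mul

lemma derivative_rodrigues_succ (n : ℕ) :
    derivative (rodrigues (n + 1) : R[X]) =
      2 * (n + 1 : R[X]) * (X * derivative (rodrigues n) + (n + 1 : R[X]) * rodrigues n) := by
  simp only [rodrigues]
  rw [← Function.iterate_succ_apply' derivative, iterate_derivative_X_sq_sub_one_pow_succ,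
    iterate_derivative_X_mul, Function.iterate_succ_apply', nsmul_eq_mul]
  push_cast
  ring

lemma two_mul_X_sq_sub_one_mul_derivative_rodrigues (n : ℕ) :
    2 * (X ^ 2 - 1) * derivative (rodrigues n : R[X]) =
      rodrigues (n + 1) - 2 * (n + 1 : R[X]) * X * rodrigues n := by
  -- Expand `rodrigues (n + 1)` once through `D ((X² - 1)ⁿ⁺¹) = 2(n + 1) X (X² - 1)ⁿ` and once
  -- through `(X² - 1)ⁿ⁺¹ = (X² - 1)(X² - 1)ⁿ`; the leftover term `E` cancels.
  set E : R[X] := n • derivative^[n - 1] ((X ^ 2 - 1) ^ n)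
  have h₁ : rodrigues (n + 1) = 2 * (n + 1 : R[X]) * (X * rodrigues n + E) := by
    rw [rodrigues, iterate_derivative_X_sq_sub_one_pow_succ, iterate_derivative_X_mul, rodrigues]
  have h₂ : rodrigues (n + 1) =
      (X ^ 2 - 1) * derivative (rodrigues n : R[X]) + 2 * (n + 1 : R[X]) * X * rodrigues n +
        (n + 1 : R[X]) * E := by
    have : (X ^ 2 - 1 : R[X]) ^ (n + 1) = X * (X * (X ^ 2 - 1) ^ n) - (X ^ 2 - 1) ^ n := by ring
    simp only [rodrigues, E]
    rw [this, iterate_derivative_sub, iterate_derivative_X_mul, iterate_derivative_X_mul,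
      iterate_derivative_X_mul, Nat.add_sub_cancel, Function.iterate_succ_apply']
    simp only [nsmul_eq_mul]
    push_cast
    ring
  linear_combination h₁ - 2 * h₂

end Polynomial

lemma two_pow_mul_factorial_ne_zero (n : ℕ) : (2 ^ n * n.factorial : ℂ) ≠ 0 := by
  exact_mod_cast (by positivity : 2 ^ n * n.factorial ≠ 0)

lemma rodrigues_eq_C_mul_legendre (n : ℕ) :
    rodrigues n = C (2 ^ n * n.factorial : ℂ) * legendre n := by
  rw [legendre, ← mul_assoc, ← C_mul, mul_one_div_cancel (two_pow_mul_factorial_ne_zero n), C_1,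
    one_mul, rodrigues]

lemma C_two_pow_mul_factorial_succ (n : ℕ) :
    C (2 ^ (n + 1) * (n + 1).factorial : ℂ) = 2 * (n + 1 : ℂ[X]) * C (2 ^ n * n.factorial : ℂ) := by
  simp only [Nat.factorial_succ, map_mul, map_pow, map_natCast, C_ofNat]
  push_cast
  ring

lemma derivative_legendre_succ (n : ℕ) :
    derivative (legendre (n + 1)) = X * derivative (legendre n) + (n + 1 : ℂ[X]) * legendre n := by
  have h := derivative_rodrigues_succ (R := ℂ) n
  simp only [rodrigues_eq_C_mul_legendre] at h
  rw [derivative_C_mul, derivative_C_mul, C_two_pow_mul_factorial_succ] at h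
  have hc : 2 * (n + 1 : ℂ[X]) * C (2 ^ n * n.factorial : ℂ) ≠ 0 := by
    rw [← C_two_pow_mul_factorial_succ, Ne, C_eq_zero]
    exact two_pow_mul_factorial_ne_zero _
  refine mul_left_cancel₀ hc ?_
  linear_combination h

lemma X_sq_sub_one_mul_derivative_legendre (n : ℕ) :
    (X ^ 2 - 1) * derivative (legendre n) =
      (n + 1 : ℂ[X]) * (legendre (n + 1) - X * legendre n) := by
  have h := two_mul_X_sq_sub_one_mul_derivative_rodrigues (R := ℂ) n
  simp only [rodrigues_eq_C_mul_legendre] at h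
  rw [derivative_C_mul, C_two_pow_mul_factorial_succ] at h
  have hc : 2 * C (2 ^ n * n.factorial : ℂ) ≠ 0 := by
    rw [← C_ofNat, ← C_mul, Ne, C_eq_zero]
    exact mul_ne_zero two_ne_zero (two_pow_mul_factorial_ne_zero _)
  refine mul_left_cancel₀ hc ?_
  linear_combination h

lemma legendre_add_two (n : ℕ) :
    (n + 2 : ℂ[X]) * legendre (n + 2) =
      (2 * n + 3 : ℂ[X]) * X * legendre (n + 1) - (n + 1 : ℂ[X]) * legendre n := by
  have h₀ := X_sq_sub_one_mul_derivative_legendre n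
  have h₁ := X_sq_sub_one_mul_derivative_legendre (n + 1)
  have hD := derivative_legendre_succ n
  push_cast at h₁
  linear_combination -h₁ + (X ^ 2 - 1) * hD + X * h₀

lemma sq_sub_one_mul_P' (n : ℕ) (w : ℂ) :
    (w ^ 2 - 1) * P' n w = (n + 1) * (P (n + 1) w - w * P n w) := by
  simpa [P, P'] using congrArg (eval w) (X_sq_sub_one_mul_derivative_legendre n)

lemma P_add_two (n : ℕ) (w : ℂ) :
    (n + 2) * P (n + 2) w = (2 * n + 3) * w * P (n + 1) w - (n + 1) * P n w := by
  simpa [P] using congrArg (eval w) (legendre_add_two n)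

lemma J_one_div (z : ℂ) : J (1 / z) = J z := by
  rw [J, J, one_div_one_div, add_comm]

lemma F_eq_zpow_mul (n : ℕ) {z : ℂ} (hz : z ≠ 0) :
    F n z = z ^ (n : ℤ) * ((n + 1) * P n (J z) + (z - 1 / z) / 2 * P' n (J z)) := by
  rw [F, zpow_sub_one₀ hz]
  field_simp

lemma G_eq_zpow_mul (n : ℕ) {z : ℂ} (hz : z ≠ 0) :
    G n z = z ^ (n : ℤ) * ((n + 1) * P n (J z) - (z - 1 / z) / 2 * P' n (J z)) := by
  rw [G, F_eq_zpow_mul n (one_div_ne_zero hz), J_one_div, one_div_one_div, one_div_zpow,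
    zpow_natCast]
  field_simp
  ring

lemma A_mul_add_B_mul_add_two (n k : ℕ) (z u v : ℂ) :
    A n (k + 2) z * u + B n (k + 2) z * v =
      ((2 * (n + k + 1) + 1) * J z * (A n (k + 1) z * u + B n (k + 1) z * v) -
        (n + k + 1) * (A n k z * u + B n k z * v)) / (n + k + 2) := by
  simp only [A, B]
  ring

lemma partial_fraction_upper_zero (n : ℕ) {z : ℂ} (hz : z ≠ 0) :
    2 * ((n : ℂ) + 1) * z ^ (2 * (n : ℤ) - 1) * P n (J z) = A n 0 z * G n z + B n 0 z * F n z := by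
  rw [show 2 * (n : ℤ) - 1 = (n - 1) + n by ring, zpow_add₀ hz]
  simp only [A, B, F_eq_zpow_mul n hz, G_eq_zpow_mul n hz]
  ring

lemma partial_fraction_upper_one (n : ℕ) {z : ℂ} (hz : z ≠ 0) :
    2 * ((n : ℂ) + 1) * z ^ (2 * (n : ℤ) - 1) * P (n + 1) (J z) =
      A n 1 z * G n z + B n 1 z * F n z := by
  set t := z ^ ((n : ℤ) - 1)
  have h₀ : z ^ (n : ℤ) = t * z := by rw [← zpow_add_one₀ hz, sub_add_cancel]
  have h₁ : z ^ ((n : ℤ) - 2) = t / z := by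
    rw [show (n : ℤ) - 2 = (n - 1) - 1 by ring, zpow_sub_one₀ hz, div_eq_mul_inv]
  have h₂ : z ^ (2 * (n : ℤ) - 1) = t ^ 2 * z := by
    rw [show 2 * (n : ℤ) - 1 = (n - 1) + n by ring, zpow_add₀ hz, h₀]
    ring
  have hJ : z + 1 / z = 2 * J z := by rw [J]; ring
  have hJ_sq : ((z - 1 / z) / 2) ^ 2 = J z ^ 2 - 1 := by rw [J]; field_simp; ring
  have h := sq_sub_one_mul_P' n (J z)
  simp only [A, B, F_eq_zpow_mul n hz, G_eq_zpow_mul n hz, h₀, h₁, h₂]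
  generalize J z = w at *
  linear_combination (norm := skip) -(t ^ 2 * z * ((n + 1) * P n w)) * hJ -
    (2 * t ^ 2 * z * P' n w) * hJ_sq - (2 * t ^ 2 * z) * h
  field_simp
  ring

theorem partial_fraction_upper_general (n : ℕ) (k : ℕ) (z : ℂ) (hz : z ≠ 0) :
    2 * ((n : ℂ) + 1) * z ^ (2 * (n : ℤ) - 1) * P (n + k) (J z) =
      A n k z * G n z + B n k z * F n z := by
  induction k using Nat.twoStepInduction with
  | zero => exact partial_fraction_upper_zero n hz
  | one => exact partial_fraction_upper_one n hz
  | more k ih₀ ih₁ =>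
    have hk : (n + k + 2 : ℂ) ≠ 0 := by exact_mod_cast (n + k).succ_ne_zero
    rw [A_mul_add_B_mul_add_two, ← ih₀, ← ih₁, eq_div_iff hk]
    have h := P_add_two (n + k) (J z)
    simp only [← add_assoc]
    push_cast at h
    linear_combination (2 * (n + 1) * z ^ (2 * (n : ℤ) - 1)) * h

/-- `2(n+1) z^{2n−1} P_{n+k}(J(z)) = A_k^{(n)}(z) G_n(z) + B_k^{(n)}(z) F_n(z)` for
`n ≥ 1`, `k ≥ 0` and `z ≠ 0`. -/
theorem partial_fraction_upper (n : ℕ) (hn : 1 ≤ n) (k : ℕ) (z : ℂ) (hz : z ≠ 0) :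
    2 * ((n : ℂ) + 1) * z ^ (2 * (n : ℤ) - 1) * P (n + k) (J z) =
      A n k z * G n z + B n k z * F n z :=
  partial_fraction_upper_general n k z hz
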